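/- For interval representations I[a,b] ≠ I[c,d] of an A_n type quiver with any orientation, at least one of Hom(I[a,b], I[c,d]) and Hom(I[c,d], I[a,b]) is zero. -/
import Mathlib


/-- Indicator of the interval `[a,b]` at vertex `i`, valued in `K`. -/
def ind (K : Type*) [Field K] (a b i : ℕ) : K := if a ≤ i ∧ i ≤ b then 1 else 0

/-- A morphism of representations from the interval representation `I[a,b]` to `I[c,d]` of the
`A_n` type quiver with orientation `τ` (vertices `1,…,n`; for `1 ≤ i < n` the `i`-th arrow
connects vertices `i` and `i+1`, pointing forward `i → i+1` if `τ i = true` and backward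
`i+1 → i` otherwise).  Since every vertex space of an interval representation is `K` or `0`,
such a morphism is a family of scalars `g i` (the map at vertex `i`), vanishing outside
`[a,b] ∩ [c,d]`, commuting with the structure maps of the two interval representations
(whose map along the `i`-th arrow is the identity iff both endpoints lie in the interval,
and zero otherwise). -/
structure IntervalHom (K : Type*) [Field K] (n : ℕ) (τ : ℕ → Bool) (a b c d : ℕ) where
  g : ℕ → K
  supp : ∀ i, ¬(a ≤ i ∧ i ≤ b ∧ c ≤ i ∧ i ≤ d) → g i = 0
  comm : ∀ i, 1 ≤ i → i < n →
    if τ i then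
      ind K c d i * ind K c d (i + 1) * g i = g (i + 1) * (ind K a b i * ind K a b (i + 1))
    else
      ind K c d i * ind K c d (i + 1) * g (i + 1) = g i * (ind K a b i * ind K a b (i + 1))

lemma const_step {K : Type*} [Field K] {n : ℕ} {τ : ℕ → Bool} {a b c d : ℕ}
    (h : IntervalHom K n τ a b c d) (i : ℕ) (h1 : 1 ≤ i) (hn : i < n)
    (hai : a ≤ i) (hib : i + 1 ≤ b) (hci : c ≤ i) (hid : i + 1 ≤ d) :
    h.g i = h.g (i + 1) := by
  have H := h.comm i h1 hn
  have e1 : ind K c d i = 1 := if_pos (by omega)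
  have e2 : ind K c d (i + 1) = 1 := if_pos (by omega)
  have e3 : ind K a b i = 1 := if_pos (by omega)
  have e4 : ind K a b (i + 1) = 1 := if_pos (by omega)
  rw [e1, e2, e3, e4] at H
  cases hτ : τ i
  · rw [hτ, if_neg Bool.false_ne_true] at H
    simpa using H.symm
  · rw [hτ, if_pos rfl] at H
    simpa using H

lemma gzero {K : Type*} [Field K] {n : ℕ} {τ : ℕ → Bool} {a b c d : ℕ}
    (h : IntervalHom K n τ a b c d) (ha1 : 1 ≤ a) (hbn : b ≤ n) {p : ℕ}
    (hap : a ≤ p) (hpb : p ≤ b) (hcp : c ≤ p) (hpd : p ≤ d) (h0 : h.g p = 0) :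
    ∀ i, h.g i = 0 := by
  have up : ∀ k, p ≤ k → k ≤ b → k ≤ d → h.g k = 0 := by
    intro k hpk
    induction k, hpk using Nat.le_induction with
    | base => intro _ _; exact h0
    | succ k hk ih =>
      intro hkb hkd
      have step := const_step h k (by omega) (by omega) (by omega) hkb (by omega) hkd
      rw [← step]
      exact ih (by omega) (by omega)
  have down : ∀ m, a ≤ p - m → c ≤ p - m → h.g (p - m) = 0 := by
    intro m
    induction m with
    | zero => intro _ _; simpa using h0
    | succ m ih =>
      intro ham hcm
      have heq : p - (m + 1) + 1 = p - m := by omega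
      have step := const_step h (p - (m + 1)) (by omega) (by omega) ham (by omega) hcm
        (by omega)
      rw [heq] at step
      rw [step]
      exact ih (by omega) (by omega)
  intro i
  by_cases hi : a ≤ i ∧ i ≤ b ∧ c ≤ i ∧ i ≤ d
  · obtain ⟨h1, h2, h3, h4⟩ := hi
    rcases le_or_gt p i with hpi | hip
    · exact up i hpi h2 h4
    · have := down (p - i) (by omega) (by omega)
      rwa [show p - (p - i) = i by omega] at this
  · exact h.supp i hi

lemma scen1 {K : Type*} [Field K] {n : ℕ} {τ : ℕ → Bool} {a b c d : ℕ}
    (ha1 : 1 ≤ a) (hbn : b ≤ n) (hac : a < c) (hcb : c ≤ b) (hccd : c ≤ d) (hdn : d ≤ n) :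
    (∀ h : IntervalHom K n τ a b c d, ∀ i, h.g i = 0) ∨
    (∀ h : IntervalHom K n τ c d a b, ∀ i, h.g i = 0) := by
  have h1 : 1 ≤ c - 1 := by omega
  have hn : c - 1 < n := by omega
  have heq : c - 1 + 1 = c := by omega
  have z1 : ind K c d (c - 1) = 0 := if_neg (by omega)
  have o1 : ind K a b (c - 1) = 1 := if_pos (by omega)
  have o2 : ind K a b c = 1 := if_pos (by omega)
  cases hτ : τ (c - 1)
  · right
    intro h
    have H := h.comm (c - 1) h1 hn
    rw [hτ, if_neg Bool.false_ne_true, heq, z1, o1, o2] at H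
    have hc0 : h.g c = 0 := by simpa using H
    exact gzero h (by omega) hdn (le_refl c) hccd hac.le hcb hc0
  · left
    intro h
    have H := h.comm (c - 1) h1 hn
    rw [hτ, if_pos rfl, heq, z1, o1, o2] at H
    have hc0 : h.g c = 0 := by simpa using H.symm
    exact gzero h ha1 hbn hac.le hcb (le_refl c) hccd hc0

lemma scen2 {K : Type*} [Field K] {n : ℕ} {τ : ℕ → Bool} {a b c d : ℕ}
    (ha1 : 1 ≤ a) (hc1 : 1 ≤ c) (hab : a ≤ b) (hcb : c ≤ b) (hbd : b < d) (hdn : d ≤ n) :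
    (∀ h : IntervalHom K n τ a b c d, ∀ i, h.g i = 0) ∨
    (∀ h : IntervalHom K n τ c d a b, ∀ i, h.g i = 0) := by
  have h1 : 1 ≤ b := le_trans ha1 hab
  have hn : b < n := by omega
  have ocb : ind K c d b = 1 := if_pos (by omega)
  have ocb1 : ind K c d (b + 1) = 1 := if_pos (by omega)
  have zab1 : ind K a b (b + 1) = 0 := if_neg (by omega)
  cases hτ : τ b
  · right
    intro h
    have H := h.comm b h1 hn
    rw [hτ, if_neg Bool.false_ne_true, zab1, ocb, ocb1] at H
    have hb0 : h.g b = 0 := by simpa using H.symm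
    exact gzero h hc1 hdn hcb hbd.le hab (le_refl b) hb0
  · left
    intro h
    have H := h.comm b h1 hn
    rw [hτ, if_pos rfl, ocb, ocb1, zab1] at H
    have hb0 : h.g b = 0 := by simpa using H
    exact gzero h ha1 hn.le hab (le_refl b) hcb hbd.le hb0

/-- For distinct interval representations `I[a,b] ≠ I[c,d]` of an `A_n`
type quiver with any orientation, at least one of `Hom(I[a,b], I[c,d])` and
`Hom(I[c,d], I[a,b])` is zero. -/
theorem intervalHom_not_both_nonzero (K : Type*) [Field K] (n : ℕ) (τ : ℕ → Bool)
    (a b c d : ℕ) (hab : 1 ≤ a ∧ a ≤ b ∧ b ≤ n) (hcd : 1 ≤ c ∧ c ≤ d ∧ d ≤ n)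
    (hne : (a, b) ≠ (c, d)) :
    (∀ h : IntervalHom K n τ a b c d, ∀ i, h.g i = 0) ∨
    (∀ h : IntervalHom K n τ c d a b, ∀ i, h.g i = 0) := by
  obtain ⟨ha1, hab, hbn⟩ := hab
  obtain ⟨hc1, hcd, hdn⟩ := hcd
  by_cases hbc : b < c
  · left; intro h i; exact h.supp i (by omega)
  by_cases hda : d < a
  · left; intro h i; exact h.supp i (by omega)
  rcases lt_trichotomy a c with hlt | heq | hgt
  · exact scen1 ha1 hbn hlt (by omega) hcd hdn
  · rcases lt_trichotomy b d with h2 | h2 | h2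
    · exact scen2 ha1 hc1 hab (by omega) h2 hdn
    · exact absurd (by rw [heq, h2]) hne
    · exact (scen2 hc1 ha1 hcd (by omega) h2 hbn).symm
  · exact (scen1 hc1 hdn hgt (by omega) hab hbn).symm
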